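/- For each s with 1 ≤ s ≤ N-1 and q a primitive N-th root of unity, the sum β_s = Σ_{i=0}^{s} q^{i·s} · binom_q(N-1-s+i, i) equals 0. -/

import Mathlib

noncomputable section

/-- The q-integer `[k]_q = 1 + q + ... + q^(k-1)`. -/
def qInt (q : ℂ) (k : ℕ) : ℂ := ∑ i ∈ Finset.range k, q ^ i

/-- The q-factorial `[k]_q! = [1]_q [2]_q ⋯ [k]_q`. -/
def qFac (q : ℂ) (k : ℕ) : ℂ := ∏ i ∈ Finset.range k, qInt q (i + 1)

/-- The q-binomial coefficient `binom_q(n, k) = [n]_q! / ([k]_q! [n-k]_q!)`. -/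
def qBinom (q : ℂ) (n k : ℕ) : ℂ := qFac q n / (qFac q k * qFac q (n - k))

/-!
With `m = N - 1 - s`, the relation `q ^ N = 1` turns the weight `q ^ (i * s)` into
`q ^ (s * s) * q ^ ((m + 1) * (s - i))`. The q-analogue of the hockey-stick identity, proved
from the q-Pascal rule, sums the reweighted terms to `binom_q(m + s + 1, s) = binom_q(N, s)`,
which vanishes because its numerator `[N]_q!` contains the factor `[N]_q = 0`.
-/

open Finset

variable {q : ℂ}

lemma qInt_add (a b : ℕ) : qInt q (a + b) = qInt q a + q ^ a * qInt q b := by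
  simp [qInt, sum_range_add, pow_add, mul_sum]

lemma qFac_succ (n : ℕ) : qFac q (n + 1) = qFac q n * qInt q (n + 1) :=
  prod_range_succ _ _

lemma qFac_ne_zero_iff {n : ℕ} : qFac q n ≠ 0 ↔ ∀ k, 1 ≤ k → k ≤ n → qInt q k ≠ 0 := by
  rw [qFac, prod_ne_zero_iff]
  refine ⟨fun h k hk1 hkn => ?_, fun h i hi => h _ (by omega) (by simpa using hi)⟩
  simpa [Nat.sub_add_cancel hk1] using h (k - 1) (by simp; omega)

lemma qFac_ne_zero_of_le {m n : ℕ} (h : qFac q n ≠ 0) (hmn : m ≤ n) : qFac q m ≠ 0 :=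
  qFac_ne_zero_iff.2 fun k hk1 hkm => qFac_ne_zero_iff.1 h k hk1 (hkm.trans hmn)

lemma qBinom_zero_right {n : ℕ} (h : qFac q n ≠ 0) : qBinom q n 0 = 1 := by
  rw [qBinom, Nat.sub_zero, show qFac q 0 = 1 from prod_range_zero _, one_mul, div_self h]

lemma qBinom_succ_succ {n k : ℕ} (h : qFac q n ≠ 0) (hkn : k < n) :
    qBinom q (n + 1) (k + 1) = q ^ (n - k) * qBinom q n k + qBinom q n (k + 1) := by
  obtain ⟨j, rfl⟩ : ∃ j, n = k + j + 1 := ⟨n - k - 1, by omega⟩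
  have hk : qFac q k ≠ 0 := qFac_ne_zero_of_le h (by omega)
  have hj : qFac q j ≠ 0 := qFac_ne_zero_of_le h (by omega)
  have hk1 : qInt q (k + 1) ≠ 0 := qFac_ne_zero_iff.1 h _ le_add_self (by omega)
  have hj1 : qInt q (j + 1) ≠ 0 := qFac_ne_zero_iff.1 h _ le_add_self (by omega)
  have hsplit : qInt q (k + j + 1 + 1) = qInt q (j + 1) + q ^ (j + 1) * qInt q (k + 1) := by
    rw [← qInt_add]; ring_nf
  simp only [qBinom, show k + j + 1 + 1 - (k + 1) = j + 1 by omega,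
    show k + j + 1 - k = j + 1 by omega, show k + j + 1 - (k + 1) = j by omega]
  rw [qFac_succ (k + j + 1), qFac_succ k, qFac_succ j, hsplit]
  field_simp
  ring

/-- The hypothesis allows `[m + k + 1]_q = 0`; for `k = 0` the right side `qBinom q (m + 1) 0`
would then be the junk value `0 / 0`, hence `1 ≤ k`. -/
lemma qBinom_hockey_stick (m : ℕ) {k : ℕ} (hk : 1 ≤ k) (h : qFac q (m + k) ≠ 0) :
    ∑ i ∈ range (k + 1), q ^ ((m + 1) * (k - i)) * qBinom q (m + i) i =
      qBinom q (m + k + 1) k := by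
  induction k, hk using Nat.le_induction with
  | base =>
    have hm : qFac q m ≠ 0 := qFac_ne_zero_of_le h (by omega)
    have hpascal := qBinom_succ_succ (k := 0) h m.succ_pos
    rw [zero_add, Nat.sub_zero] at hpascal
    simp [sum_range_succ, hpascal, qBinom_zero_right h, qBinom_zero_right hm]
  | succ k hk ih =>
    have hrec : ∀ i ∈ range (k + 1), q ^ ((m + 1) * (k + 1 - i)) * qBinom q (m + i) i =
        q ^ (m + 1) * (q ^ ((m + 1) * (k - i)) * qBinom q (m + i) i) := by
      intro i hi
      rw [show (m + 1) * (k + 1 - i) = (m + 1) + (m + 1) * (k - i) by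
        rw [mem_range] at hi; rw [Nat.sub_add_comm (by omega)]; ring, pow_add, mul_assoc]
    rw [← add_assoc] at h
    have hpascal := qBinom_succ_succ h (k := k) (by omega)
    rw [show m + k + 1 - k = m + 1 by omega] at hpascal
    rw [sum_range_succ, sum_congr rfl hrec, ← mul_sum, ih (qFac_ne_zero_of_le h (by omega))]
    simp only [← add_assoc]
    simp [hpascal]

variable {N : ℕ}

lemma IsPrimitiveRoot.qFac_ne_zero (hq : IsPrimitiveRoot q N) {n : ℕ} (hn : n < N) :
    qFac q n ≠ 0 :=
  qFac_ne_zero_iff.2 fun k hk1 hkn h0 =>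
    hq.pow_ne_one_of_pos_of_lt (by omega) (hkn.trans_lt hn) <| by
      have hgeom : qInt q k * (q - 1) = q ^ k - 1 := geom_sum_mul q k
      rwa [h0, zero_mul, eq_comm, sub_eq_zero] at hgeom

lemma IsPrimitiveRoot.qBinom_left_eq_zero (hq : IsPrimitiveRoot q N) (hN : 1 < N) (k : ℕ) :
    qBinom q N k = 0 := by
  have hfac : qFac q N = 0 :=
    prod_eq_zero (mem_range.2 (Nat.sub_lt (by omega) one_pos))
      (by simpa [Nat.sub_add_cancel hN.le, qInt] using hq.geom_sum_eq_zero hN)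
  simp [qBinom, hfac]

theorem betaSum_eq_zero_general (N : ℕ) (q : ℂ) (hq : IsPrimitiveRoot q N)
    (s : ℕ) (hs1 : 1 ≤ s) (hs2 : s ≤ N - 1) :
    ∑ i ∈ Finset.range (s + 1), q ^ (i * s) * qBinom q (N - 1 - s + i) i = 0 := by
  set m := N - 1 - s
  have hN : m + s + 1 = N := by omega
  have hweight : ∀ i ∈ range (s + 1), q ^ (i * s) * qBinom q (m + i) i =
      q ^ (s * s) * (q ^ ((m + 1) * (s - i)) * qBinom q (m + i) i) := by
    intro i hi
    have hexp : s * s + (m + 1) * (s - i) = i * s + N * (s - i) := by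
      rw [mem_range] at hi
      obtain ⟨d, rfl⟩ : ∃ d, s = i + d := ⟨s - i, by omega⟩
      rw [← hN, Nat.add_sub_cancel_left]; ring
    rw [← mul_assoc, ← pow_add, hexp, pow_add, pow_mul q N, hq.pow_eq_one, one_pow, mul_one]
  rw [sum_congr rfl hweight, ← mul_sum, qBinom_hockey_stick m hs1 (hq.qFac_ne_zero (by omega)),
    hN, hq.qBinom_left_eq_zero (by omega), mul_zero]

/-- For `1 ≤ s ≤ N-1`, the sum `β_s = ∑_{i=0}^{s} q^{i·s} binom_q(N-1-s+i, i)` vanishes. -/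
theorem betaSum_eq_zero (N : ℕ) (hN : N.Prime) (q : ℂ) (hq : IsPrimitiveRoot q N)
    (s : ℕ) (hs1 : 1 ≤ s) (hs2 : s ≤ N - 1) :
    ∑ i ∈ Finset.range (s + 1), q ^ (i * s) * qBinom q (N - 1 - s + i) i = 0 :=
  betaSum_eq_zero_general N q hq s hs1 hs2
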